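/- For every integer n ≥ 3, the polynomial Q_n(x) = x^n − 2(n−1)·Σ_{j=1}^{n−1} x^j + 1 has exactly one real root strictly larger than 1. -/
import Mathlib

open Polynomial in
/-- The polynomial `Q_n(x) = x^n − 2(n−1)·Σ_{j=1}^{n−1} x^j + 1`. -/
noncomputable def Qpoly (n : ℕ) : Polynomial ℝ :=
  X ^ n - C (2 * ((n : ℝ) - 1)) * (∑ j ∈ Finset.Icc 1 (n - 1), X ^ j) + 1

open Polynomial Finset in
lemma eval_Qpoly (n : ℕ) (x : ℝ) :
    (Qpoly n).eval x = x ^ n - 2 * ((n : ℝ) - 1) * (∑ j ∈ Finset.Icc 1 (n - 1), x ^ j) + 1 := by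
  simp [Qpoly, eval_finset_sum]

open Finset in
lemma reflect_sum (n : ℕ) (x : ℝ) :
    ∑ j ∈ Icc 1 (n - 1), x ^ (n - j) = ∑ j ∈ Icc 1 (n - 1), x ^ j := by
  refine Finset.sum_nbij' (fun j => n - j) (fun j => n - j) ?_ ?_ ?_ ?_ ?_ <;>
      simp only [mem_Icc] <;> intro a ha
  · omega
  · omega
  · omega
  · omega
  · trivial

open Finset in
lemma key_ineq (n : ℕ) (hn : 3 ≤ n) {x y : ℝ} (hx : 1 < x) (hxy : x < y) :
    (x ^ n + 1) * (∑ j ∈ Icc 1 (n - 1), y ^ j) <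
      (y ^ n + 1) * (∑ j ∈ Icc 1 (n - 1), x ^ j) := by
  have hy : 1 < y := hx.trans hxy
  have hid : (y ^ n + 1) * (∑ j ∈ Icc 1 (n - 1), x ^ j)
      - (x ^ n + 1) * (∑ j ∈ Icc 1 (n - 1), y ^ j)
      = ∑ j ∈ Icc 1 (n - 1), ((x * y) ^ (n - j) - 1) * (y ^ j - x ^ j) := by
    have hterm : ∀ j ∈ Icc 1 (n - 1),
        ((x * y) ^ (n - j) - 1) * (y ^ j - x ^ j)
        = x ^ (n - j) * y ^ n - x ^ n * y ^ (n - j) - y ^ j + x ^ j := by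
      intro j hj
      simp only [mem_Icc] at hj
      have h1 : y ^ (n - j) * y ^ j = y ^ n := by rw [← pow_add]; congr 1; omega
      have h2 : x ^ (n - j) * x ^ j = x ^ n := by rw [← pow_add]; congr 1; omega
      rw [mul_pow]; linear_combination x ^ (n - j) * h1 - y ^ (n - j) * h2
    rw [Finset.sum_congr rfl hterm]
    simp only [Finset.sum_add_distrib, Finset.sum_sub_distrib, ← Finset.mul_sum,
      ← Finset.sum_mul, reflect_sum]
    ring
  have hpos : 0 < ∑ j ∈ Icc 1 (n - 1), ((x * y) ^ (n - j) - 1) * (y ^ j - x ^ j) := by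
    apply Finset.sum_pos
    · intro j hj
      simp only [mem_Icc] at hj
      have h1 : 1 < x * y := by nlinarith
      have h2 : 1 < (x * y) ^ (n - j) := one_lt_pow₀ h1 (by omega)
      have h3 : x ^ j < y ^ j := by
        apply pow_lt_pow_left₀ hxy (by linarith) (by omega)
      nlinarith
    · exact ⟨1, by simp only [mem_Icc]; omega⟩
  linarith

open Finset in
theorem stmt13 (n : ℕ) (hn : 3 ≤ n) :
    ∃! x : ℝ, 1 < x ∧ (Qpoly n).eval x = 0 := by
  have hn3 : (3 : ℝ) ≤ (n : ℝ) := by exact_mod_cast hn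
  set f : ℝ → ℝ := fun x => (Qpoly n).eval x with hf
  have hcard : (Icc 1 (n - 1)).card = n - 1 := by
    rw [Nat.card_Icc]; omega
  -- f 1 < 0
  have hf1 : f 1 < 0 := by
    simp only [hf, eval_Qpoly, one_pow]
    rw [Finset.sum_const, hcard]
    have : ((n : ℝ) - 1) = ((n - 1 : ℕ) : ℝ) := by
      push_cast [Nat.cast_sub (by omega : 1 ≤ n)]; ring
    rw [nsmul_eq_mul, ← this]
    nlinarith
  -- f M > 0 for M = 2 n ^ 2
  set M : ℝ := 2 * (n : ℝ) ^ 2 with hM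
  have hM1 : 1 < M := by nlinarith
  have hfM : 0 < f M := by
    have hsum : ∑ j ∈ Icc 1 (n - 1), M ^ j ≤ ((n : ℝ) - 1) * M ^ (n - 1) := by
      have : ∑ j ∈ Icc 1 (n - 1), M ^ j ≤ (Icc 1 (n-1)).card • M ^ (n - 1) := by
        apply Finset.sum_le_card_nsmul
        intro j hj
        simp only [mem_Icc] at hj
        exact pow_le_pow_right₀ (by linarith) hj.2
      rw [hcard, nsmul_eq_mul] at this
      have hc : ((n - 1 : ℕ) : ℝ) = (n : ℝ) - 1 := by
        push_cast [Nat.cast_sub (by omega : 1 ≤ n)]; ring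
      rwa [hc] at this
    have hMpow : M ^ n = M * M ^ (n - 1) := by
      rw [← pow_succ']; congr 1; omega
    have hMp : (0:ℝ) < M ^ (n - 1) := pow_pos (by linarith) _
    simp only [hf, eval_Qpoly]
    have h2 : 2 * ((n:ℝ) - 1) * (((n:ℝ) - 1) * M ^ (n - 1)) < M * M ^ (n-1) := by
      have : 2 * ((n:ℝ) - 1) * ((n:ℝ) - 1) < M := by nlinarith
      nlinarith
    have hsnn : 0 ≤ ∑ j ∈ Icc 1 (n - 1), M ^ j :=
      Finset.sum_nonneg fun j _ => pow_nonneg (by linarith) _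
    nlinarith [mul_le_mul_of_nonneg_left hsum (by nlinarith : (0:ℝ) ≤ 2 * ((n:ℝ)-1))]
  -- existence by IVT
  have hcont : ContinuousOn f (Set.Icc 1 M) := ((Qpoly n).continuous_aeval).continuousOn
  have hiv := intermediate_value_Icc (le_of_lt hM1) hcont
  have h0mem : (0:ℝ) ∈ Set.Icc (f 1) (f M) := ⟨le_of_lt hf1, le_of_lt hfM⟩
  obtain ⟨c, hc, hc0⟩ := hiv h0mem
  have hc1 : 1 < c := by
    rcases lt_or_eq_of_le hc.1 with h | h
    · exact h
    · exfalso; rw [← h] at hc0; linarith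
  -- positivity of sums, root equation
  have Spos : ∀ z : ℝ, 1 < z → 0 < ∑ j ∈ Icc 1 (n - 1), z ^ j := by
    intro z hz
    apply Finset.sum_pos (fun j _ => pow_pos (by linarith) j) ⟨1, by simp only [mem_Icc]; omega⟩
  have root_eq : ∀ z : ℝ, f z = 0 →
      z ^ n + 1 = 2 * ((n:ℝ) - 1) * ∑ j ∈ Icc 1 (n - 1), z ^ j := by
    intro z hz
    simp only [hf, eval_Qpoly] at hz
    linarith
  refine ⟨c, ⟨hc1, hc0⟩, ?_⟩
  rintro y ⟨hy1, hy0⟩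
  by_contra hne
  have key : ∀ a b : ℝ, 1 < a → a < b → f a = 0 → f b = 0 → False := by
    intro a b ha hab ha0 hb0
    have h := key_ineq n hn ha hab
    rw [root_eq a ha0, root_eq b hb0] at h
    have Sa := Spos a ha
    have Sb := Spos b (ha.trans hab)
    nlinarith
  rcases lt_trichotomy y c with h | h | h
  · exact key y c hy1 h hy0 hc0
  · exact hne h
  · exact key c y hc1 h hc0 hy0
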